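/- arXiv:nlin/0004022 — 2 statements merged into one kernel-verified Lean document; each statement's English description precedes it below -/
import Mathlib

section
/- Let H ∈ ℝ^{M×N}, K ∈ ℝ^{N×M}, A ∈ ℝ^{N×N}, B ∈ ℝ^N, and c ∈ ℝ. Assume HA = 0, the matrix HK has no zero column, and for all n, m: ((A − c·I)K)_{nm} = K_{nm} (HB)_m. Then HB = −c·1̄_M (where 1̄_M is the all-ones vector) and AK = 0. -/
/-- The key algebraic reduction for finite Toda symmetries: if `HA = 0`, `HK`
has no zero column, and `((A - cI)K)_{nm} = K_{nm} (HB)_m`, then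
`HB = -c 1̄` and `AK = 0`. -/
theorem toda_determining_reduction (M N : ℕ)
    (H : Matrix (Fin M) (Fin N) ℝ) (K : Matrix (Fin N) (Fin M) ℝ)
    (A : Matrix (Fin N) (Fin N) ℝ) (B : Fin N → ℝ) (c : ℝ)
    (hHA : H * A = 0)
    (hcol : ∀ m : Fin M, ∃ k : Fin M, (H * K) k m ≠ 0)
    (hdet : ∀ (n : Fin N) (m : Fin M),
      ((A - c • (1 : Matrix (Fin N) (Fin N) ℝ)) * K) n m = K n m * H.mulVec B m) :
    (H.mulVec B = fun _ => -c) ∧ A * K = 0 := by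
  have h2 : H * ((A - c • (1 : Matrix (Fin N) (Fin N) ℝ)) * K) = (-c) • (H * K) := by
    rw [← Matrix.mul_assoc, Matrix.mul_sub, hHA, Matrix.mul_smul, Matrix.mul_one,
      zero_sub, neg_smul, Matrix.neg_mul, Matrix.smul_mul]
  have key : ∀ (k : Fin M) (m : Fin M), (-c) * (H * K) k m = (H * K) k m * H.mulVec B m := by
    intro k m
    have h1 : (H * ((A - c • (1 : Matrix (Fin N) (Fin N) ℝ)) * K)) k m
        = (H * K) k m * H.mulVec B m := by
      simp only [Matrix.mul_apply, hdet]
      rw [Finset.sum_mul]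
      exact Finset.sum_congr rfl fun n _ => by ring
    rw [← h1, h2]
    simp
  have hHB : H.mulVec B = fun _ => -c := by
    funext m
    obtain ⟨k, hk⟩ := hcol m
    have := key k m
    rw [mul_comm] at this
    exact (mul_left_cancel₀ hk this).symm
  refine ⟨hHB, ?_⟩
  ext n m
  have := hdet n m
  rw [hHB] at this
  simp only [Matrix.sub_mul, Matrix.smul_mul, Matrix.one_mul, Matrix.sub_apply,
    Matrix.smul_apply, smul_eq_mul] at this
  simp only [Matrix.zero_apply]
  linarith [this]
end

section
/- Let u : ℝ² → ℝ be smooth with ∂_x∂_y u(x,y) = exp(u(x,y)) for all (x,y). Let ψ, χ : ℝ → ℝ be smooth with ψ'(x) > 0 and χ'(y) > 0 everywhere. Then v(x,y) := u(ψ(x), χ(y)) + ln(ψ'(x)·χ'(y)) satisfies ∂_x∂_y v(x,y) = exp(v(x,y)) for all (x,y). -/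
/-- The mixed second derivative `∂_x ∂_y f` of a function of two real variables. -/
noncomputable def Dxy (f : ℝ → ℝ → ℝ) (x y : ℝ) : ℝ :=
  deriv (fun x' => deriv (fun y' => f x' y') y) x

/-- The partial derivative in the second variable, expressed via `fderiv`. -/
noncomputable def D2 (u : ℝ → ℝ → ℝ) (s t : ℝ) : ℝ :=
  fderiv ℝ (Function.uncurry u) (s, t) (0, 1)

theorem hasDerivAt_D2 (u : ℝ → ℝ → ℝ) (hu : ContDiff ℝ (⊤ : ℕ∞) (Function.uncurry u))
    (s t : ℝ) : HasDerivAt (fun t' => u s t') (D2 u s t) t := by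
  have h1 : HasFDerivAt (Function.uncurry u)
      (fderiv ℝ (Function.uncurry u) (s, t)) (s, t) :=
    ((hu.differentiable (by simp)) (s, t)).hasFDerivAt
  have h2 : HasDerivAt (fun t' : ℝ => ((s, t') : ℝ × ℝ)) (0, 1) t :=
    (hasDerivAt_const t s).prodMk (hasDerivAt_id t)
  exact h1.comp_hasDerivAt t h2

theorem contDiff_D2 (u : ℝ → ℝ → ℝ) (hu : ContDiff ℝ (⊤ : ℕ∞) (Function.uncurry u)) :
    ContDiff ℝ (⊤ : ℕ∞) (Function.uncurry (D2 u)) := by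
  exact (ContinuousLinearMap.apply ℝ ℝ (((0 : ℝ), (1 : ℝ)))).contDiff.comp
    (hu.fderiv_right (m := (⊤ : ℕ∞)) (by simp))

theorem hasDerivAt_D2_fst (u : ℝ → ℝ → ℝ) (hu : ContDiff ℝ (⊤ : ℕ∞) (Function.uncurry u))
    (s t : ℝ) : HasDerivAt (fun s' => D2 u s' t) (Dxy u s t) s := by
  have hdiff : DifferentiableAt ℝ (fun s' => D2 u s' t) s := by
    have heq : (fun s' => D2 u s' t)
        = Function.uncurry (D2 u) ∘ (fun s' : ℝ => (s', t)) := rfl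
    rw [heq]
    exact (((contDiff_D2 u hu).differentiable (by simp)) (s, t)).comp s
      (differentiableAt_id.prodMk (differentiableAt_const t))
  have hval : deriv (fun s' => D2 u s' t) s = Dxy u s t := by
    unfold Dxy
    congr 1
    funext s'
    exact ((hasDerivAt_D2 u hu s' t).deriv).symm
  exact hval ▸ hdiff.hasDerivAt

/-- Conformal invariance of the Liouville equation `u_{xy} = e^u`: if `u` is a
smooth solution and `ψ, χ` are smooth with positive derivatives, then
`v(x,y) = u(ψ x, χ y) + log(ψ'(x) χ'(y))` is again a solution. -/
theorem liouville_conformal_invariance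
    (u : ℝ → ℝ → ℝ) (hu : ContDiff ℝ (⊤ : ℕ∞) (Function.uncurry u))
    (hsol : ∀ x y, Dxy u x y = Real.exp (u x y))
    (ψ χ : ℝ → ℝ) (hψ : ContDiff ℝ (⊤ : ℕ∞) ψ) (hχ : ContDiff ℝ (⊤ : ℕ∞) χ)
    (hψ' : ∀ x, 0 < deriv ψ x) (hχ' : ∀ y, 0 < deriv χ y) :
    ∀ x y, Dxy (fun a b => u (ψ a) (χ b) + Real.log (deriv ψ a * deriv χ b)) x y
      = Real.exp (u (ψ x) (χ y) + Real.log (deriv ψ x * deriv χ y)) := by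
  intro x y
  have hψ2 := contDiff_infty_iff_deriv.mp (hψ.of_le (by simp))
  have hχ2 := contDiff_infty_iff_deriv.mp (hχ.of_le (by simp))
  have hinner : ∀ a, deriv (fun y' => u (ψ a) (χ y') + Real.log (deriv ψ a * deriv χ y')) y
      = D2 u (ψ a) (χ y) * deriv χ y + (deriv χ y)⁻¹ * deriv (deriv χ) y := by
    intro a
    have h1 : HasDerivAt (fun y' => u (ψ a) (χ y')) (D2 u (ψ a) (χ y) * deriv χ y) y :=
      (hasDerivAt_D2 u hu (ψ a) (χ y)).comp y (hχ2.1 y).hasDerivAt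
    have h2 : HasDerivAt (fun y' => Real.log (deriv ψ a * deriv χ y'))
        ((deriv χ y)⁻¹ * deriv (deriv χ) y) y := by
      have heq : (fun y' => Real.log (deriv ψ a * deriv χ y'))
          = fun y' => Real.log (deriv ψ a) + Real.log (deriv χ y') := by
        funext y'
        exact Real.log_mul (hψ' a).ne' (hχ' y').ne'
      rw [heq]
      exact ((Real.hasDerivAt_log (hχ' y).ne').comp y
        ((hχ2.2.differentiable (by simp)) y).hasDerivAt).const_add _
    exact (h1.add h2).deriv
  have houter : HasDerivAt
      (fun a => D2 u (ψ a) (χ y) * deriv χ y + (deriv χ y)⁻¹ * deriv (deriv χ) y)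
      (Dxy u (ψ x) (χ y) * deriv ψ x * deriv χ y) x := by
    have h3 : HasDerivAt (fun a => D2 u (ψ a) (χ y)) (Dxy u (ψ x) (χ y) * deriv ψ x) x :=
      (hasDerivAt_D2_fst u hu (ψ x) (χ y)).comp x (hψ2.1 x).hasDerivAt
    exact (h3.mul_const (deriv χ y)).add_const _
  unfold Dxy
  have hfun : (fun x' => deriv (fun y' => u (ψ x') (χ y') + Real.log (deriv ψ x' * deriv χ y')) y)
      = fun a => D2 u (ψ a) (χ y) * deriv χ y + (deriv χ y)⁻¹ * deriv (deriv χ) y :=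
    funext hinner
  rw [hfun, houter.deriv, hsol, Real.exp_add, Real.exp_log (mul_pos (hψ' x) (hχ' y))]
  ring
end
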